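/- arXiv:2506.23082 — 3 statements merged into one kernel-verified Lean document; each statement's English description precedes it below -/
import Mathlib

section
/- For any sequences of integers (a_1, a_2, ...) and (b_1, b_2, ...) with finitely many nonzero terms, the sum over pairs 1 ≤ i ≤ j of (a_i − b_i)(b_j − a_{j+1}) equals the sum over i ≥ 1 of (binom(a_i, 2) − binom(b_i, 2)) minus binom(Σ_{i≥1}(a_i − b_i), 2). -/
open Finset

/-- `binom2 c = c(c-1)/2`, the polynomial binomial coefficient `binom(c,2)`
interpreted for all integers `c` (the division is exact). -/
def binom2 (c : ℤ) : ℤ := c * (c - 1) / 2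

/-!
Write `d_i = a_i - b_i`. Adding the column `j = n + 1` to the double sum adds
`(d_1 + ⋯ + d_{n+1}) (b_{n+1} - a_{n+2})`, and the Vandermonde identity
`binom(x + y, 2) = binom(x, 2) + binom(y, 2) + x y` shows that the right-hand side, corrected by
the boundary term `-(d_1 + ⋯ + d_n) a_{n+1}`, grows by the same amount. Induction on `n` then
gives the identity for every `n`, and at `n = N` the boundary term vanishes.
-/

theorem sum_Icc_sum_Icc_mul_succ_top {R : Type*} [NonUnitalNonAssocSemiring R]
    (x y : ℕ → R) (n : ℕ) :
    ∑ i ∈ Icc 1 (n + 1), ∑ j ∈ Icc i (n + 1), x i * y j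
      = ∑ i ∈ Icc 1 n, ∑ j ∈ Icc i n, x i * y j + (∑ i ∈ Icc 1 (n + 1), x i) * y (n + 1) := by
  have hn : 1 ≤ n + 1 := Nat.le_add_left 1 n
  have hcol : ∀ i ∈ Icc 1 n,
      ∑ j ∈ Icc i (n + 1), x i * y j = ∑ j ∈ Icc i n, x i * y j + x i * y (n + 1) :=
    fun i hi => sum_Icc_succ_top ((mem_Icc.mp hi).2.trans n.le_succ) _
  rw [sum_Icc_succ_top hn, sum_Icc_succ_top hn, sum_congr rfl hcol, sum_add_distrib,
    Icc_self, sum_singleton, add_mul, sum_mul, add_assoc]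

theorem two_mul_binom2 (c : ℤ) : 2 * binom2 c = c * (c - 1) :=
  Int.mul_ediv_cancel' (Int.even_mul_pred_self c).two_dvd

theorem binom2_add (x y : ℤ) : binom2 (x + y) = binom2 x + binom2 y + x * y := by
  apply mul_left_cancel₀ (two_ne_zero : (2 : ℤ) ≠ 0)
  linear_combination two_mul_binom2 (x + y) - two_mul_binom2 x - two_mul_binom2 y

theorem sum_Icc_sum_Icc_eq_sum_binom2_sub (a b : ℕ → ℤ) (n : ℕ) :
    ∑ i ∈ Icc 1 n, ∑ j ∈ Icc i n, (a i - b i) * (b j - a (j + 1))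
      = ∑ i ∈ Icc 1 n, (binom2 (a i) - binom2 (b i)) - binom2 (∑ i ∈ Icc 1 n, (a i - b i))
        - (∑ i ∈ Icc 1 n, (a i - b i)) * a (n + 1) := by
  induction n with
  | zero => simp [binom2]
  | succ n ih =>
    have hn : 1 ≤ n + 1 := Nat.le_add_left 1 n
    rw [sum_Icc_sum_Icc_mul_succ_top, ih, sum_Icc_succ_top hn, sum_Icc_succ_top hn,
      binom2_add]
    have hsplit := binom2_add (b (n + 1)) (a (n + 1) - b (n + 1))
    rw [add_sub_cancel] at hsplit
    linear_combination -hsplit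

theorem stmt0_general (N : ℕ) (a b : ℕ → ℤ)
    (ha : ∀ i, N < i → a i = 0) :
    ∑ i ∈ Finset.Icc 1 N, ∑ j ∈ Finset.Icc i N, (a i - b i) * (b j - a (j + 1))
      = (∑ i ∈ Finset.Icc 1 N, (binom2 (a i) - binom2 (b i)))
        - binom2 (∑ i ∈ Finset.Icc 1 N, (a i - b i)) := by
  rw [sum_Icc_sum_Icc_eq_sum_binom2_sub, ha (N + 1) N.lt_succ_self, mul_zero, sub_zero]

/-- Lemma 4.6 of the paper: for integer sequences `a, b` with finitely many nonzero
terms (all terms beyond `N` vanish),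
`Σ_{1 ≤ i ≤ j} (a_i - b_i)(b_j - a_{j+1})
  = Σ_{i ≥ 1} (binom(a_i,2) - binom(b_i,2)) - binom(Σ_{i≥1}(a_i - b_i), 2)`. -/
theorem stmt0 (N : ℕ) (a b : ℕ → ℤ)
    (ha : ∀ i, N < i → a i = 0) (hb : ∀ i, N < i → b i = 0) :
    ∑ i ∈ Finset.Icc 1 N, ∑ j ∈ Finset.Icc i N, (a i - b i) * (b j - a (j + 1))
      = (∑ i ∈ Finset.Icc 1 N, (binom2 (a i) - binom2 (b i)))
        - binom2 (∑ i ∈ Finset.Icc 1 N, (a i - b i)) :=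
  stmt0_general N a b ha
end

section
/- Let ν be a partition of n+k and μ a partition of n with ν/μ a vertical strip. Then n(ν) − n(μ) − binom(k,2) = Σ_{1 ≤ i ≤ j} (ν'_i − μ'_i)(μ'_j − ν'_{j+1}), where n(λ) = Σ_{i≥1} (i−1)λ_i. -/
open Finset

/-
Writing `n(λ) = Σ_j binom(λ'_j, 2)` (count the cells of column `j` with weight `row − 1`),
both sides become polynomial expressions in the column lengths `c_j = ν'_j`, `m_j = μ'_j`.
With `a_j = c_j − m_j` and `k = Σ_j a_j`, the inner sum over `j ≥ i` telescopes to
`m_i − Σ_{j > i} a_j` as soon as the columns vanish beyond the first row of `ν`, and what is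
left is the expansion of `binom(k, 2)`.
-/

/-- Conjugate partition: `conjP N lam j = #{i ∈ [1,N] : lam i ≥ j}`. -/
def conjP (N : ℕ) (lam : ℕ → ℕ) (j : ℕ) : ℕ :=
  ((Finset.Icc 1 N).filter (fun i => j ≤ lam i)).card

theorem sum_Icc_sub_one (m : ℕ) : ∑ i ∈ Icc 1 m, (i - 1) = m.choose 2 := by
  rw [← Ico_add_one_right_eq_Icc, sum_Ico_eq_sum_range, Nat.choose_two_right, ← sum_range_id]
  simp

theorem natCast_choose_two_mul_two (n : ℕ) : (n.choose 2 : ℤ) * 2 = n * (n - 1) := by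
  have h : ((n.choose 2 : ℤ) : ℚ) * 2 = ((n * (n - 1) : ℤ) : ℚ) := by
    push_cast
    rw [Nat.cast_choose_two]
    ring
  exact_mod_cast h

theorem sum_mul_eq_sum_Icc_sum_filter_le {ι : Type*} (s : Finset ι) (f lam : ι → ℕ) {M : ℕ}
    (hM : ∀ i ∈ s, lam i ≤ M) :
    ∑ i ∈ s, f i * lam i = ∑ j ∈ Icc 1 M, ∑ i ∈ s with j ≤ lam i, f i := by
  simp_rw [sum_filter]
  rw [sum_comm]
  refine sum_congr rfl fun i hi => ?_
  have hrow : (Icc 1 M).filter (· ≤ lam i) = Icc 1 (lam i) := by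
    ext j
    simp only [mem_filter, mem_Icc]
    have := hM i hi
    omega
  rw [← sum_filter, hrow, sum_const, Nat.card_Icc, smul_eq_mul, Nat.add_sub_cancel, mul_comm]

section Conjugate

variable {N M : ℕ} {lam : ℕ → ℕ}

theorem filter_le_eq_Icc_conjP (hlam : ∀ i j, 1 ≤ i → i ≤ j → lam j ≤ lam i) (j : ℕ) :
    (Icc 1 N).filter (fun i => j ≤ lam i) = Icc 1 (conjP N lam j) := by
  induction N with
  | zero => simp [conjP]
  | succ N ih =>
    by_cases hN : j ≤ lam (N + 1)
    · have hall : ∀ i ∈ Icc 1 (N + 1), j ≤ lam i := fun i hi =>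
        hN.trans (hlam i (N + 1) (mem_Icc.1 hi).1 (mem_Icc.1 hi).2)
      simp [conjP, filter_true_of_mem hall]
    · rw [conjP, ← insert_Icc_right_eq_Icc_add_one (by omega), filter_insert, if_neg hN]
      exact ih

theorem sum_Icc_conjP (hM : ∀ i ∈ Icc 1 N, lam i ≤ M) :
    ∑ j ∈ Icc 1 M, conjP N lam j = ∑ i ∈ Icc 1 N, lam i := by
  simpa [conjP] using (sum_mul_eq_sum_Icc_sum_filter_le (Icc 1 N) 1 lam hM).symm

theorem sum_sub_one_mul_eq_sum_choose_conjP (hlam : ∀ i j, 1 ≤ i → i ≤ j → lam j ≤ lam i)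
    (hM : ∀ i ∈ Icc 1 N, lam i ≤ M) :
    ∑ i ∈ Icc 1 N, (i - 1) * lam i = ∑ j ∈ Icc 1 M, (conjP N lam j).choose 2 := by
  rw [sum_mul_eq_sum_Icc_sum_filter_le _ (· - 1) lam hM]
  exact sum_congr rfl fun j _ => by rw [filter_le_eq_Icc_conjP hlam, sum_Icc_sub_one]

theorem natCast_sum_sub_one_mul_mul_two (hlam : ∀ i j, 1 ≤ i → i ≤ j → lam j ≤ lam i)
    (hM : ∀ i ∈ Icc 1 N, lam i ≤ M) :
    ((∑ i ∈ Icc 1 N, (i - 1) * lam i : ℕ) : ℤ) * 2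
      = ∑ j ∈ Icc 1 M, (conjP N lam j : ℤ) * (conjP N lam j - 1) := by
  rw [sum_sub_one_mul_eq_sum_choose_conjP hlam hM, Nat.cast_sum, sum_mul]
  exact sum_congr rfl fun j _ => natCast_choose_two_mul_two _

theorem conjP_eq_zero_of_lt (hM : ∀ i ∈ Icc 1 N, lam i ≤ M) {j : ℕ} (hj : M < j) :
    conjP N lam j = 0 := by
  rw [conjP, card_eq_zero, filter_eq_empty_iff]
  exact fun i hi => by have := hM i hi; omega

end Conjugate

/-- Twice the theorem's identity, for arbitrary integer columns `c = ν'` and `m = μ'`; the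
boundary term on the right vanishes once `c (M + 1) = 0`. -/
theorem two_mul_sum_sub_choose_sub_double_sum (c m : ℕ → ℤ) (M : ℕ) :
    ∑ j ∈ Icc 1 M, (c j * (c j - 1) - m j * (m j - 1))
      - (∑ j ∈ Icc 1 M, (c j - m j)) * ((∑ j ∈ Icc 1 M, (c j - m j)) - 1)
      - 2 * ∑ i ∈ Icc 1 M, ∑ j ∈ Icc i M, (c i - m i) * (m j - c (j + 1))
      = 2 * (∑ j ∈ Icc 1 M, (c j - m j)) * c (M + 1) := by
  induction M with
  | zero => simp
  | succ M ih =>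
    have hM : 1 ≤ M + 1 := by omega
    have hinner : ∑ i ∈ Icc 1 M, ∑ j ∈ Icc i (M + 1), (c i - m i) * (m j - c (j + 1))
        = ∑ i ∈ Icc 1 M, ∑ j ∈ Icc i M, (c i - m i) * (m j - c (j + 1))
          + (∑ j ∈ Icc 1 M, (c j - m j)) * (m (M + 1) - c (M + 2)) := by
      rw [sum_mul, ← sum_add_distrib]
      exact sum_congr rfl fun i hi => sum_Icc_succ_top (by grind) _
    rw [sum_Icc_succ_top hM, sum_Icc_succ_top hM, sum_Icc_succ_top hM, hinner, Icc_self,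
      sum_singleton]
    linear_combination ih

theorem stmt2_general (N n k : ℕ) (nu mu : ℕ → ℕ)
    (hnu : ∀ i j, 1 ≤ i → i ≤ j → nu j ≤ nu i)
    (hmu : ∀ i j, 1 ≤ i → i ≤ j → mu j ≤ mu i)
    (hnusum : ∑ i ∈ Finset.Icc 1 N, nu i = n + k)
    (hmusum : ∑ i ∈ Finset.Icc 1 N, mu i = n)
    (hsub : ∀ i, mu i ≤ nu i) :
    ((∑ i ∈ Finset.Icc 1 N, (i - 1) * nu i : ℕ) : ℤ)
        - ((∑ i ∈ Finset.Icc 1 N, (i - 1) * mu i : ℕ) : ℤ)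
        - (Nat.choose k 2 : ℤ)
      = ∑ i ∈ Finset.Icc 1 (nu 1), ∑ j ∈ Finset.Icc i (nu 1),
          ((conjP N nu i : ℤ) - (conjP N mu i : ℤ))
            * ((conjP N mu j : ℤ) - (conjP N nu (j + 1) : ℤ)) := by
  have hnuM : ∀ i ∈ Icc 1 N, nu i ≤ nu 1 := fun i hi => hnu 1 i le_rfl (mem_Icc.1 hi).1
  have hmuM : ∀ i ∈ Icc 1 N, mu i ≤ nu 1 := fun i hi => (hsub i).trans (hnuM i hi)
  have hk : ∑ j ∈ Icc 1 (nu 1), ((conjP N nu j : ℤ) - conjP N mu j) = k := by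
    rw [sum_sub_distrib, ← Nat.cast_sum, ← Nat.cast_sum, sum_Icc_conjP hnuM, sum_Icc_conjP hmuM,
      hnusum, hmusum]
    push_cast
    ring
  have key := two_mul_sum_sub_choose_sub_double_sum (conjP N nu ·) (conjP N mu ·) (nu 1)
  rw [hk, conjP_eq_zero_of_lt hnuM (Nat.lt_succ_self _), Nat.cast_zero, sum_sub_distrib,
    ← natCast_sum_sub_one_mul_mul_two hnu hnuM, ← natCast_sum_sub_one_mul_mul_two hmu hmuM] at key
  linarith [natCast_choose_two_mul_two k]

/-- Let `ν ⊢ n+k` and `μ ⊢ n` with `ν/μ` a vertical strip.  Then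
`n(ν) - n(μ) - binom(k,2) = Σ_{1 ≤ i ≤ j} (ν'_i - μ'_i)(μ'_j - ν'_{j+1})`,
where `n(λ) = Σ_{i≥1} (i-1) λ_i`. -/
theorem stmt2 (N n k : ℕ) (nu mu : ℕ → ℕ)
    (hnu : ∀ i j, 1 ≤ i → i ≤ j → nu j ≤ nu i)
    (hnuN : ∀ i, N < i → nu i = 0)
    (hmu : ∀ i j, 1 ≤ i → i ≤ j → mu j ≤ mu i)
    (hmuN : ∀ i, N < i → mu i = 0)
    (hnusum : ∑ i ∈ Finset.Icc 1 N, nu i = n + k)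
    (hmusum : ∑ i ∈ Finset.Icc 1 N, mu i = n)
    (hsub : ∀ i, mu i ≤ nu i)
    (hvs : ∀ i, nu i ≤ mu i + 1) :
    ((∑ i ∈ Finset.Icc 1 N, (i - 1) * nu i : ℕ) : ℤ)
        - ((∑ i ∈ Finset.Icc 1 N, (i - 1) * mu i : ℕ) : ℤ)
        - (Nat.choose k 2 : ℤ)
      = ∑ i ∈ Finset.Icc 1 (nu 1), ∑ j ∈ Finset.Icc i (nu 1),
          ((conjP N nu i : ℤ) - (conjP N mu i : ℤ))
            * ((conjP N mu j : ℤ) - (conjP N nu (j + 1) : ℤ)) :=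
  stmt2_general N n k nu mu hnu hmu hnusum hmusum hsub
end

section
/- The principal specialization of the chromatic quasisymmetric function of a natural unit interval order satisfies X_γ(1, q, ..., q^{α−1}; q) = q^{area(γ)} Π_{i=1}^n [α − a_i(γ)]_q, where a_i(γ) is the number of cells in row i below γ and above the diagonal and area(γ) = Σ_i a_i(γ). -/
/-!
Peel off the first vertex. Its later neighbours `2, …, h 1` form a clique (the column heights
are weakly increasing), so in a proper colouring they carry `h 1 - 1` distinct colours `S`, and
the first vertex takes a colour `c ∉ S`. The weight it contributes is
`q ^ (c + #{s ∈ S | c < s}) = q ^ #S * q ^ (rank of c among the colours outside S)`, whence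
summing over `c` gives `q ^ (h 1 - 1) * [α - (h 1 - 1)]_q` whatever the colouring of the rest.
The rest is the unit interval graph of the Dyck path with its first column removed, whose
area sequence is that of `γ` with the entry `a_{h 1}(γ) = h 1 - 1` deleted.
-/

open Finset Polynomial

attribute [local instance] Classical.propDecidable

noncomputable section

/-- `[n]_q` as a polynomial in `q = X`. -/
def qint (m : ℕ) : Polynomial ℤ := ∑ t ∈ Finset.range m, X ^ t

/-- `a_i(γ)` : the number of cells in row `i` below the Dyck path with column heights
`h` and strictly above the diagonal, i.e. `#{c : 1 ≤ c < i, i ≤ h c}`. -/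
def aH (h : ℕ → ℕ) (i : ℕ) : ℕ := ((Finset.Ico 1 i).filter (fun c => i ≤ h c)).card

theorem qint_succ (m : ℕ) : qint (m + 1) = qint m + X ^ m := sum_range_succ _ _

theorem subset_range_of_subset_range_succ {α : ℕ} {S : Finset ℕ} (hS : S ⊆ range (α + 1))
    (hα : α ∉ S) : S ⊆ range α := fun _ hs ↦
  mem_range.mpr <| lt_of_le_of_ne (mem_range_succ_iff.mp (hS hs)) fun hsα ↦ hα (hsα ▸ hs)

theorem sum_range_sdiff_X_pow_add_card_gt {α : ℕ} {S : Finset ℕ} (hS : S ⊆ range α) :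
    ∑ c ∈ range α \ S, (X : ℤ[X]) ^ (c + #{s ∈ S | c < s}) = X ^ #S * qint (α - #S) := by
  induction α generalizing S with
  | zero => simp [subset_empty.mp hS, qint]
  | succ α ih =>
    by_cases hα : α ∈ S
    · obtain ⟨T, hαT, rfl⟩ : ∃ T, α ∉ T ∧ S = insert α T :=
        ⟨S.erase α, notMem_erase α S, (insert_erase hα).symm⟩
      have hT := subset_range_of_subset_range_succ (insert_subset_iff.mp hS).2 hαT
      have hcount : ∀ c ∈ range α \ T, #{s ∈ insert α T | c < s} = #{s ∈ T | c < s} + 1 := by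
        intro c hc
        rw [filter_insert, if_pos (mem_range.mp (mem_sdiff.mp hc).1),
          card_insert_of_notMem fun h ↦ hαT (mem_filter.mp h).1]
      rw [range_add_one, insert_sdiff_of_mem _ (mem_insert_self α T),
        sdiff_insert_of_notMem notMem_range_self, sum_congr rfl fun c hc ↦ by rw [hcount c hc],
        card_insert_of_notMem hαT]
      simp only [← add_assoc, pow_succ, ← sum_mul, ih hT]
      rw [Nat.add_sub_add_right]
      ring
    · have hS' := subset_range_of_subset_range_succ hS hα
      have hcard : #S ≤ α := by simpa using card_le_card hS'
      have hnone : #{s ∈ S | α < s} = 0 := by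
        simp only [card_eq_zero, filter_eq_empty_iff]
        exact fun s hs ↦ not_lt.mpr (mem_range.mp (hS' hs)).le
      rw [range_add_one, insert_sdiff_of_notMem _ hα, sum_insert (by simp), hnone, ih hS',
        Nat.sub_add_comm hcard, qint_succ, mul_add, ← pow_add, Nat.add_sub_cancel' hcard]
      ring

theorem sum_notMem_image_X_pow {ι : Type*} {α : ℕ} (N : Finset ι) {g : ι → Fin α}
    (hg : Set.InjOn g N) :
    ∑ c : Fin α with c ∉ N.image g, (X : ℤ[X]) ^ ((c : ℕ) + #{j ∈ N | c < g j}) =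
      X ^ #N * qint (α - #N) := by
  have hinj : Set.InjOn (fun j ↦ (g j : ℕ)) N := fun i hi j hj hij ↦ hg hi hj (Fin.ext hij)
  have hS : N.image (fun j ↦ (g j : ℕ)) ⊆ range α := by simp [subset_iff]
  rw [← card_image_of_injOn hinj, ← sum_range_sdiff_X_pow_add_card_gt hS]
  refine sum_bij (fun c _ ↦ (c : ℕ)) ?_ (fun _ _ _ _ ↦ Fin.ext) ?_ ?_
  · intro c hc
    simp only [mem_filter, mem_univ, true_and, mem_image, not_exists, not_and] at hc
    simpa using fun j hj hjc ↦ hc j hj (Fin.ext hjc)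
  · intro b hb
    simp only [mem_sdiff, mem_range, mem_image, not_exists, not_and] at hb
    exact ⟨⟨b, hb.1⟩, by simpa using fun j hj hjb ↦ hb.2 j hj (by rw [hjb]), rfl⟩
  · intro c _
    rw [filter_image, card_image_of_injOn (hinj.mono (filter_subset _ _))]
    rfl

theorem prod_Icc_one_eq_prod_fin {M : Type*} [CommMonoid M] (f : ℕ → M) (n : ℕ) :
    ∏ i ∈ Icc 1 n, f i = ∏ i : Fin n, f (i + 1) := by
  rw [Fin.prod_univ_eq_prod_range (fun i ↦ f (i + 1)), range_eq_Ico, prod_Ico_add',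
    Ico_add_one_right_eq_Icc]

namespace UnitIntervalOrder

variable {n α : ℕ} (h : ℕ → ℕ)

-- Vertex `i : Fin n` stands for `i + 1`, so `i < j` are adjacent iff `j + 1 ≤ h (i + 1)`.
def IsProperColoring (κ : Fin n → Fin α) : Prop :=
  ∀ i j : Fin n, i < j → (j : ℕ) + 1 ≤ h ((i : ℕ) + 1) → κ i ≠ κ j

def ascents (κ : Fin n → Fin α) : ℕ :=
  #{p : Fin n × Fin n | p.1 < p.2 ∧ (p.2 : ℕ) + 1 ≤ h ((p.1 : ℕ) + 1) ∧ κ p.1 < κ p.2}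

def weight (κ : Fin n → Fin α) : ℕ := ascents h κ + ∑ v, (κ v : ℕ)

def principalSpecialization (n α : ℕ) : ℤ[X] :=
  ∑ κ : Fin n → Fin α with IsProperColoring h κ, X ^ weight h κ

/-- Column heights of the Dyck path with its first column (and bottom row) removed. -/
def tailHeights : ℕ → ℕ := fun i ↦ h (i + 1) - 1

/-- The later neighbours `2, …, h 1` of vertex `1`, as vertices of the tail graph. -/
def headNeighbors (n : ℕ) : Finset (Fin n) := {j : Fin n | (j : ℕ) + 1 < h 1}

variable {h}

theorem card_headNeighbors (hh : h 1 ≤ n + 1) : #(headNeighbors h n) = h 1 - 1 := by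
  rw [headNeighbors, filter_congr fun j _ ↦ Nat.add_lt_iff_lt_sub_right, Fin.card_filter_val_lt]
  omega

theorem IsProperColoring.injOn_headNeighbors {g : Fin n → Fin α}
    (hg : IsProperColoring (tailHeights h) g) (hmono : ∀ i, 1 ≤ i → i ≤ n + 1 → h 1 ≤ h i) :
    Set.InjOn g (headNeighbors h n) := by
  have hadj : ∀ i j : Fin n, i < j → j ∈ headNeighbors h n → g i ≠ g j := fun i j hij hj ↦ by
    refine hg i j hij ?_
    have := hmono ((i : ℕ) + 1 + 1) (by omega) (by omega)
    simp only [headNeighbors, mem_filter, mem_univ, true_and] at hj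
    simp only [tailHeights]
    omega
  intro i hi j hj hgij
  rcases lt_trichotomy i j with hlt | rfl | hgt
  · exact absurd hgij (hadj i j hlt hj)
  · rfl
  · exact absurd hgij.symm (hadj j i hgt hi)

variable (c : Fin α) (g : Fin n → Fin α)

theorem isProperColoring_cons_iff :
    IsProperColoring h (Fin.cons c g : Fin (n + 1) → Fin α) ↔
      c ∉ (headNeighbors h n).image g ∧ IsProperColoring (tailHeights h) g := by
  simp only [IsProperColoring, headNeighbors, tailHeights, Fin.forall_fin_succ]
  simp [Fin.succ_lt_succ_iff, Nat.lt_sub_iff_add_lt, eq_comm]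

theorem ascents_cons :
    ascents h (Fin.cons c g : Fin (n + 1) → Fin α) =
      ascents (tailHeights h) g + #{j ∈ headNeighbors h n | c < g j} := by
  simp only [ascents, headNeighbors, tailHeights, card_filter, Fintype.sum_prod_type,
    Fin.sum_univ_succ, filter_filter]
  simp only [lt_self_iff_false, Fin.coe_ofNat_eq_mod, Nat.zero_mod, zero_add, Fin.cons_zero,
    and_false, and_self, ↓reduceIte, Fin.succ_pos, Fin.val_succ, Order.add_one_le_iff,
    Fin.cons_succ, true_and, sum_boole, Nat.cast_id, not_lt_zero, false_and,
    Fin.succ_lt_succ_iff, Nat.lt_sub_iff_add_lt]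
  rw [add_comm]
  simp only [card_filter, Fintype.sum_prod_type]

theorem weight_cons :
    weight h (Fin.cons c g : Fin (n + 1) → Fin α) =
      weight (tailHeights h) g + ((c : ℕ) + #{j ∈ headNeighbors h n | c < g j}) := by
  rw [weight, weight, ascents_cons, Fin.sum_univ_succ]
  simp only [Fin.cons_zero, Fin.cons_succ]
  ring

theorem principalSpecialization_succ (hh : h 1 ≤ n + 1)
    (hmono : ∀ i, 1 ≤ i → i ≤ n + 1 → h 1 ≤ h i) :
    principalSpecialization h (n + 1) α =
      principalSpecialization (tailHeights h) n α * (X ^ (h 1 - 1) * qint (α - (h 1 - 1))) := by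
  calc principalSpecialization h (n + 1) α
      = ∑ g : Fin n → Fin α, ∑ c : Fin α, if IsProperColoring h (Fin.cons c g : Fin (n + 1) → Fin α)
          then (X : ℤ[X]) ^ weight h (Fin.cons c g : Fin (n + 1) → Fin α) else 0 := by
        rw [principalSpecialization, sum_filter,
          ← Fintype.sum_equiv (Fin.consEquiv _) _ _ fun _ ↦ rfl, Fintype.sum_prod_type, sum_comm]
        rfl
    _ = ∑ g : Fin n → Fin α with IsProperColoring (tailHeights h) g,
          X ^ weight (tailHeights h) g * ∑ c : Fin α with c ∉ (headNeighbors h n).image g,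
            X ^ ((c : ℕ) + #{j ∈ headNeighbors h n | c < g j}) := by
        rw [sum_filter]
        refine sum_congr rfl fun g _ ↦ ?_
        by_cases hg : IsProperColoring (tailHeights h) g
        · simp [isProperColoring_cons_iff, weight_cons, hg, pow_add, mul_sum, sum_filter]
        · simp [isProperColoring_cons_iff, hg]
    _ = _ := by
        rw [principalSpecialization, sum_mul]
        refine sum_congr rfl fun g hg ↦ ?_
        rw [sum_notMem_image_X_pow _ ((mem_filter.mp hg).2.injOn_headNeighbors hmono),
          card_headNeighbors hh]

theorem aH_eq_sub_one {i : ℕ} (hi : i ≤ h 1) (hmono : ∀ c ∈ Ico 1 i, h 1 ≤ h c) :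
    aH h i = i - 1 := by
  rw [aH, filter_true_of_mem fun c hc ↦ hi.trans (hmono c hc), Nat.card_Ico]

theorem aH_tailHeights_add_ite {k : ℕ} (hk : 1 ≤ k) :
    aH (tailHeights h) k + (if k + 1 ≤ h 1 then 1 else 0) = aH h (k + 1) := by
  obtain ⟨m, rfl⟩ : ∃ m, k = m + 1 := ⟨k - 1, by omega⟩
  rw [aH, aH, card_filter, card_filter, sum_Ico_eq_sum_range, sum_Ico_eq_sum_range,
    Nat.add_sub_cancel, Nat.add_sub_cancel, sum_range_succ']
  congr 1
  refine sum_congr rfl fun c _ ↦ if_congr ?_ rfl rfl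
  simp only [tailHeights, add_assoc]
  omega

theorem prod_Icc_aH_succ {M : Type*} [CommMonoid M] (f : ℕ → M)
    (hh : 1 ≤ h 1 ∧ h 1 ≤ n + 1) (hmono : ∀ i, 1 ≤ i → i ≤ n + 1 → h 1 ≤ h i) :
    ∏ i ∈ Icc 1 (n + 1), f (aH h i) = f (h 1 - 1) * ∏ i ∈ Icc 1 n, f (aH (tailHeights h) i) := by
  have hsmall : ∀ i ≤ h 1, aH h i = i - 1 := fun i hi ↦
    aH_eq_sub_one hi fun c hc ↦ hmono c (mem_Ico.mp hc).1 (by have := (mem_Ico.mp hc).2; omega)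
  let p : Fin (n + 1) := ⟨h 1 - 1, by omega⟩
  rw [prod_Icc_one_eq_prod_fin, prod_Icc_one_eq_prod_fin, Fin.prod_univ_succAbove _ p]
  congr 1
  · show f (aH h (h 1 - 1 + 1)) = f (h 1 - 1)
    rw [hsmall _ (by omega)]
    rfl
  · refine prod_congr rfl fun k _ ↦ congrArg f ?_
    have hshift := aH_tailHeights_add_ite (h := h) (k := k + 1) (by omega)
    rcases lt_or_ge (Fin.castSucc k) p with hk | hk
    · rw [Fin.succAbove_of_castSucc_lt _ _ hk]
      have : (k : ℕ) < h 1 - 1 := hk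
      rw [if_pos (by omega), hsmall _ (by omega)] at hshift
      rw [Fin.val_castSucc, hsmall _ (by omega)]
      omega
    · rw [Fin.succAbove_of_le_castSucc _ _ hk]
      have : h 1 - 1 ≤ (k : ℕ) := hk
      rw [if_neg (by omega)] at hshift
      simpa using hshift.symm

theorem principalSpecialization_eq_prod
    (hDyck : ∀ i, 1 ≤ i → i ≤ n → i ≤ h i ∧ h i ≤ n)
    (hMono : ∀ i j, 1 ≤ i → i ≤ j → j ≤ n → h i ≤ h j) :
    principalSpecialization h n α = ∏ i ∈ Icc 1 n, X ^ aH h i * qint (α - aH h i) := by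
  induction n generalizing h with
  | zero => simp [principalSpecialization, IsProperColoring, weight, ascents]
  | succ n ih =>
    have hh := hDyck 1 le_rfl (by omega)
    have hmono : ∀ i, 1 ≤ i → i ≤ n + 1 → h 1 ≤ h i := fun i hi hin ↦ hMono 1 i le_rfl hi hin
    have hDyck' : ∀ i, 1 ≤ i → i ≤ n → i ≤ tailHeights h i ∧ tailHeights h i ≤ n := by
      intro i hi hin
      have := hDyck (i + 1) (by omega) (by omega)
      simp only [tailHeights]
      omega
    have hMono' : ∀ i j, 1 ≤ i → i ≤ j → j ≤ n → tailHeights h i ≤ tailHeights h j := by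
      intro i j hi hij hjn
      have := hMono (i + 1) (j + 1) (by omega) (by omega) (by omega)
      simp only [tailHeights]
      omega
    rw [principalSpecialization_succ hh.2 hmono, ih hDyck' hMono',
      prod_Icc_aH_succ (fun a ↦ X ^ a * qint (α - a)) hh hmono, mul_comm]

end UnitIntervalOrder

/-- Principal specialization of the chromatic quasisymmetric function of the natural
unit interval order given by a Dyck path `γ` with column heights `h` (vertices
`1, …, n`, edge `{i,j}` for `i < j ≤ h i`):
`X_γ(1, q, …, q^{α-1}; q) = q^{area(γ)} Π_{i=1}^n [α - a_i(γ)]_q`.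

The left side is the sum over proper colorings `κ : [n] → [α]` of
`q^{asc(κ)} Π_v q^{κ(v)-1}` (vertices and colors are encoded by `Fin n`, `Fin α`,
shifted by one). -/
theorem stmt13 (n α : ℕ) (h : ℕ → ℕ)
    (hDyck : ∀ i, 1 ≤ i → i ≤ n → i ≤ h i ∧ h i ≤ n)
    (hMono : ∀ i j, 1 ≤ i → i ≤ j → j ≤ n → h i ≤ h j) :
    ∑ κ ∈ Finset.univ.filter (fun κ : Fin n → Fin α =>
        ∀ i j : Fin n, i < j → ((j : ℕ) + 1 ≤ h ((i : ℕ) + 1)) → κ i ≠ κ j),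
      (X : Polynomial ℤ) ^
        ((Finset.univ.filter (fun p : Fin n × Fin n =>
            p.1 < p.2 ∧ ((p.2 : ℕ) + 1 ≤ h ((p.1 : ℕ) + 1)) ∧ κ p.1 < κ p.2)).card
          + ∑ v : Fin n, (κ v : ℕ))
      = X ^ (∑ i ∈ Finset.Icc 1 n, aH h i) * ∏ i ∈ Finset.Icc 1 n, qint (α - aH h i) := by
  rw [← prod_pow_eq_pow_sum, ← prod_mul_distrib,
    ← UnitIntervalOrder.principalSpecialization_eq_prod (α := α) hDyck hMono]
  unfold UnitIntervalOrder.principalSpecialization UnitIntervalOrder.weight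
    UnitIntervalOrder.ascents UnitIntervalOrder.IsProperColoring
  -- the two sides differ only in their `Decidable` instances
  convert rfl
end
end
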